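/- Let R be a normed ring with unit whose norm is submultiplicative (‖ab‖ ≤ ‖a‖·‖b‖) and ultrametric (‖a+b‖ ≤ max(‖a‖,‖b‖)). Let π ∈ R be a nonzero idempotent (π² = π) and let 0 < ε < 1. Then the set O = {g ∈ R : ‖σ·g·σ' − π‖ < ε for all σ, σ' ∈ {1, π}} is closed under multiplication: if g, h ∈ O then g·h ∈ O. -/
import Mathlib


/-- In a normed (unital) ring whose norm is submultiplicative and ultrametric, for a nonzero
idempotent `π` and `0 < ε < 1`, the set
`O = {g : ‖σ·g·σ' − π‖ < ε for all σ, σ' ∈ {1, π}}` is closed under multiplication. -/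
theorem statement15 (R : Type*) [NormedRing R]
    (hultra : ∀ a b : R, ‖a + b‖ ≤ max ‖a‖ ‖b‖)
    (hsubmul : ∀ a b : R, ‖a * b‖ ≤ ‖a‖ * ‖b‖)
    (π : R) (hπne : π ≠ 0) (hidem : π * π = π)
    (ε : ℝ) (hε0 : 0 < ε) (hε1 : ε < 1)
    (g h : R)
    (hg : ∀ σ ∈ ({1, π} : Set R), ∀ σ' ∈ ({1, π} : Set R), ‖σ * g * σ' - π‖ < ε)
    (hh : ∀ σ ∈ ({1, π} : Set R), ∀ σ' ∈ ({1, π} : Set R), ‖σ * h * σ' - π‖ < ε) :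
    ∀ σ ∈ ({1, π} : Set R), ∀ σ' ∈ ({1, π} : Set R), ‖σ * (g * h) * σ' - π‖ < ε := by
  intro σ hσ σ' hσ'
  have h1 : ‖σ * g - π‖ < ε := by
    have := hg σ hσ 1 (by simp); simpa using this
  have h2 : ‖σ * g * π - π‖ < ε := hg σ hσ π (by simp)
  have h3 : ‖π * h * σ' - π‖ < ε := hh π (by simp) σ' hσ'
  have h4 : ‖h * σ' - π‖ < ε := by
    have := hh 1 (by simp) σ' hσ'; simpa using this
  have key : σ * (g * h) * σ' - π
      = (σ * g - π) * (h * σ' - π) + (σ * g * π - π) + (π * h * σ' - π) := by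
    have : σ * (g * h) * σ' - π
        = (σ * g - π) * (h * σ' - π) + (σ * g * π - π * π) + (π * h * σ' - π) := by
      noncomm_ring
    rw [this, hidem]
  rw [key]
  have hA : ‖(σ * g - π) * (h * σ' - π)‖ < ε := by
    calc ‖(σ * g - π) * (h * σ' - π)‖ ≤ ‖σ * g - π‖ * ‖h * σ' - π‖ := hsubmul _ _
      _ < ε := by nlinarith [norm_nonneg (σ * g - π), norm_nonneg (h * σ' - π)]
  calc ‖(σ * g - π) * (h * σ' - π) + (σ * g * π - π) + (π * h * σ' - π)‖
      ≤ max ‖(σ * g - π) * (h * σ' - π) + (σ * g * π - π)‖ ‖π * h * σ' - π‖ := hultra _ _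
    _ ≤ max (max ‖(σ * g - π) * (h * σ' - π)‖ ‖σ * g * π - π‖) ‖π * h * σ' - π‖ := by
        exact max_le_max (hultra _ _) le_rfl
    _ < ε := by
        simp only [max_lt_iff]
        exact ⟨⟨hA, h2⟩, h3⟩
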